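/- arXiv:2005.02108 — 2 statements merged into one kernel-verified Lean document; each statement's English description precedes it below -/
import Mathlib

section
/- The five Tiles states in ℂ³⊗ℂ³ form an unextendible product basis: there is no nonzero product vector |a⟩⊗|b⟩ ∈ ℂ³⊗ℂ³ orthogonal to all five of |0⟩⊗(|0⟩−|1⟩), (|0⟩−|1⟩)⊗|2⟩, |2⟩⊗(|1⟩−|2⟩), (|1⟩−|2⟩)⊗|0⟩, (|0⟩+|1⟩+|2⟩)⊗(|0⟩+|1⟩+|2⟩). -/
noncomputable section

def e {n : ℕ} (i : Fin n) : EuclideanSpace ℂ (Fin n) := EuclideanSpace.single i 1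

def tp {m n : ℕ} (a : EuclideanSpace ℂ (Fin m)) (b : EuclideanSpace ℂ (Fin n)) :
    EuclideanSpace ℂ (Fin m × Fin n) := WithLp.toLp 2 (fun p => a p.1 * b p.2)

def T : Fin 5 → EuclideanSpace ℂ (Fin 3 × Fin 3) :=
  ![tp (e 0) (e 0 - e 1), tp (e 0 - e 1) (e 2), tp (e 2) (e 1 - e 2),
    tp (e 1 - e 2) (e 0), tp (e 0 + e 1 + e 2) (e 0 + e 1 + e 2)]

lemma tiles_key (a0 a1 a2 b0 b1 b2 : ℂ)
    (h1 : a0 * (b0 - b1) = 0) (h2 : (a0 - a1) * b2 = 0) (h3 : a2 * (b1 - b2) = 0)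
    (h4 : (a1 - a2) * b0 = 0) (h5 : (a0 + a1 + a2) * (b0 + b1 + b2) = 0)
    (ha : ¬(a0 = 0 ∧ a1 = 0 ∧ a2 = 0)) (hb : ¬(b0 = 0 ∧ b1 = 0 ∧ b2 = 0)) : False := by
  by_cases ha0 : a0 = 0
  · by_cases ha1 : a1 = 0
    · have ha2 : a2 ≠ 0 := fun h => ha ⟨ha0, ha1, h⟩
      have hb0 : b0 = 0 := by
        rcases mul_eq_zero.mp h4 with h | h
        · exact absurd (show a2 = 0 by linear_combination ha1 - h) ha2
        · exact h
      have hb12 : b1 = b2 := by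
        rcases mul_eq_zero.mp h3 with h | h
        · exact absurd h ha2
        · linear_combination h
      have hs : b0 + b1 + b2 = 0 := by
        rcases mul_eq_zero.mp h5 with h | h
        · exact absurd (show a2 = 0 by linear_combination h - ha0 - ha1) ha2
        · exact h
      have h2b : (2 : ℂ) * b1 = 0 := by linear_combination hs - hb0 + hb12
      have hb1 : b1 = 0 := (mul_eq_zero.mp h2b).resolve_left two_ne_zero
      exact hb ⟨hb0, hb1, hb12.symm.trans hb1⟩
    · have hb2 : b2 = 0 := by
        rcases mul_eq_zero.mp h2 with h | h
        · exact absurd (show a1 = 0 by linear_combination ha0 - h) ha1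
        · exact h
      by_cases hb1 : b1 = 0
      · have hb0 : b0 ≠ 0 := fun h => hb ⟨h, hb1, hb2⟩
        have e4 : a1 - a2 = 0 := (mul_eq_zero.mp h4).resolve_right hb0
        have e5 : a0 + a1 + a2 = 0 := by
          rcases mul_eq_zero.mp h5 with h | h
          · exact h
          · exact absurd (show b0 = 0 by linear_combination h - hb1 - hb2) hb0
        have h2a : (2 : ℂ) * a1 = 0 := by linear_combination e5 - ha0 + e4
        exact ha1 ((mul_eq_zero.mp h2a).resolve_left two_ne_zero)
      · have ha2 : a2 = 0 := by
          rcases mul_eq_zero.mp h3 with h | h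
          · exact h
          · exact absurd (show b1 = 0 by linear_combination h + hb2) hb1
        have hb0 : b0 = 0 := by
          rcases mul_eq_zero.mp h4 with h | h
          · exact absurd (show a1 = 0 by linear_combination h + ha2) ha1
          · exact h
        rcases mul_eq_zero.mp h5 with h | h
        · exact ha1 (by linear_combination h - ha0 - ha2)
        · exact hb1 (by linear_combination h - hb0 - hb2)
  · have hb01 : b0 = b1 := by
      rcases mul_eq_zero.mp h1 with h | h
      · exact absurd h ha0
      · linear_combination h
    by_cases hb2 : b2 = 0
    · have hb0 : b0 ≠ 0 := fun h => hb ⟨h, hb01.symm.trans h, hb2⟩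
      have e4 : a1 = a2 := by
        rcases mul_eq_zero.mp h4 with h | h
        · linear_combination h
        · exact absurd h hb0
      have ha2 : a2 = 0 := by
        rcases mul_eq_zero.mp h3 with h | h
        · exact h
        · exact absurd (show b0 = 0 by linear_combination h + hb2 + hb01) hb0
      have ha1 : a1 = 0 := e4.trans ha2
      rcases mul_eq_zero.mp h5 with h | h
      · exact ha0 (by linear_combination h - ha1 - ha2)
      · have h2b : (2 : ℂ) * b0 = 0 := by linear_combination h + hb01 - hb2
        exact hb0 ((mul_eq_zero.mp h2b).resolve_left two_ne_zero)
    · have ha01 : a0 = a1 := by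
        rcases mul_eq_zero.mp h2 with h | h
        · linear_combination h
        · exact absurd h hb2
      by_cases hb0 : b0 = 0
      · have hb1 : b1 = 0 := hb01.symm.trans hb0
        have ha2 : a2 = 0 := by
          rcases mul_eq_zero.mp h3 with h | h
          · exact h
          · exact absurd (show b2 = 0 by linear_combination hb1 - h) hb2
        rcases mul_eq_zero.mp h5 with h | h
        · have h2a : (2 : ℂ) * a0 = 0 := by linear_combination h + ha01 - ha2
          exact ha0 ((mul_eq_zero.mp h2a).resolve_left two_ne_zero)
        · exact hb2 (by linear_combination h - hb0 - hb1)
      · have ha12 : a1 = a2 := by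
          rcases mul_eq_zero.mp h4 with h | h
          · linear_combination h
          · exact absurd h hb0
        have hb12 : b1 = b2 := by
          rcases mul_eq_zero.mp h3 with h | h
          · exact absurd (ha01.trans (ha12.trans h)) ha0
          · linear_combination h
        rcases mul_eq_zero.mp h5 with h | h
        · have h3a : (3 : ℂ) * a0 = 0 := by linear_combination h + 2 * ha01 + ha12
          exact ha0 ((mul_eq_zero.mp h3a).resolve_left three_ne_zero)
        · have h3b : (3 : ℂ) * b0 = 0 := by linear_combination h + 2 * hb01 + hb12
          exact hb0 ((mul_eq_zero.mp h3b).resolve_left three_ne_zero)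

theorem tiles_unextendible :
    ¬ ∃ (a b : EuclideanSpace ℂ (Fin 3)),
      tp a b ≠ 0 ∧ ∀ i : Fin 5, inner ℂ (T i) (tp a b) = (0 : ℂ) := by
  rintro ⟨a, b, hne, hi⟩
  have ha : ¬(a 0 = 0 ∧ a 1 = 0 ∧ a 2 = 0) := by
    rintro ⟨h0, h1, h2⟩
    apply hne
    ext p
    have hz : ∀ i : Fin 3, a i = 0 := by intro i; fin_cases i <;> assumption
    simp [tp, hz]
  have hb : ¬(b 0 = 0 ∧ b 1 = 0 ∧ b 2 = 0) := by
    rintro ⟨h0, h1, h2⟩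
    apply hne
    ext p
    have hz : ∀ i : Fin 3, b i = 0 := by intro i; fin_cases i <;> assumption
    simp [tp, hz]
  have h1 : a 0 * (b 0 - b 1) = 0 := by
    have h := hi 0
    simp only [T, tp, e, PiLp.inner_apply, RCLike.inner_apply, Fintype.sum_prod_type,
      Fin.sum_univ_three, Matrix.cons_val_zero, PiLp.sub_apply, PiLp.add_apply,
      EuclideanSpace.single_apply] at h
    simp at h
    linear_combination h
  have h2 : (a 0 - a 1) * b 2 = 0 := by
    have h := hi 1
    simp only [T, tp, e, PiLp.inner_apply, RCLike.inner_apply, Fintype.sum_prod_type,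
      Fin.sum_univ_three, Matrix.cons_val_one, Matrix.head_cons, PiLp.sub_apply,
      PiLp.add_apply, EuclideanSpace.single_apply] at h
    simp at h
    linear_combination h
  have h3 : a 2 * (b 1 - b 2) = 0 := by
    have h := hi 2
    simp only [T, tp, e, PiLp.inner_apply, RCLike.inner_apply, Fintype.sum_prod_type,
      Fin.sum_univ_three, Matrix.cons_val_two, Matrix.tail_cons, Matrix.head_cons,
      PiLp.sub_apply, PiLp.add_apply, EuclideanSpace.single_apply] at h
    simp at h
    linear_combination h
  have h4 : (a 1 - a 2) * b 0 = 0 := by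
    have h := hi 3
    simp only [T, tp, e, PiLp.inner_apply, RCLike.inner_apply, Fintype.sum_prod_type,
      Fin.sum_univ_three, Matrix.cons_val_three, Matrix.tail_cons, Matrix.head_cons,
      PiLp.sub_apply, PiLp.add_apply, EuclideanSpace.single_apply] at h
    simp at h
    linear_combination h
  have h5 : (a 0 + a 1 + a 2) * (b 0 + b 1 + b 2) = 0 := by
    have h := hi 4
    simp only [T, tp, e, PiLp.inner_apply, RCLike.inner_apply, Fintype.sum_prod_type,
      Fin.sum_univ_three, Matrix.cons_val_four, Matrix.cons_val_succ, Matrix.tail_cons,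
      Matrix.head_cons, PiLp.sub_apply, PiLp.add_apply, EuclideanSpace.single_apply] at h
    simp at h
    linear_combination h
  exact tiles_key (a 0) (a 1) (a 2) (b 0) (b 1) (b 2) h1 h2 h3 h4 h5 ha hb
end
end

section
/- The four Shift states |0⟩⊗|1⟩⊗(|0⟩−|1⟩), |1⟩⊗(|0⟩−|1⟩)⊗|0⟩, (|0⟩−|1⟩)⊗|0⟩⊗|1⟩, (|0⟩+|1⟩)⊗(|0⟩+|1⟩)⊗(|0⟩+|1⟩) in ℂ²⊗ℂ²⊗ℂ² are pairwise orthogonal and there exists no nonzero product vector a⊗b⊗c orthogonal to all four of them. -/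
noncomputable section

def tp3 {l m n : ℕ} (a : EuclideanSpace ℂ (Fin l)) (b : EuclideanSpace ℂ (Fin m))
    (c : EuclideanSpace ℂ (Fin n)) : EuclideanSpace ℂ (Fin l × Fin m × Fin n) :=
  WithLp.toLp 2 (fun p => a p.1 * b p.2.1 * c p.2.2)

def Sh : Fin 4 → EuclideanSpace ℂ (Fin 2 × Fin 2 × Fin 2) :=
  ![tp3 (e 0) (e 1) (e 0 - e 1), tp3 (e 1) (e 0 - e 1) (e 0),
    tp3 (e 0 - e 1) (e 0) (e 1), tp3 (e 0 + e 1) (e 0 + e 1) (e 0 + e 1)]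

set_option maxHeartbeats 1000000 in
theorem shift_upb :
    (∀ i j : Fin 4, i ≠ j → inner ℂ (Sh i) (Sh j) = (0 : ℂ)) ∧
    ¬ ∃ (a b c : EuclideanSpace ℂ (Fin 2)),
      tp3 a b c ≠ 0 ∧ ∀ i : Fin 4, inner ℂ (Sh i) (tp3 a b c) = (0 : ℂ) := by
  constructor
  · intro i j hij
    fin_cases i <;> fin_cases j <;>
      simp_all [Sh, tp3, e, PiLp.inner_apply, RCLike.inner_apply, Fintype.sum_prod_type,
        Fin.sum_univ_two, EuclideanSpace.single_apply]
  · rintro ⟨a, b, c, hne, horth⟩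
    have h0 := horth 0; have h1 := horth 1; have h2 := horth 2; have h3 := horth 3
    simp [Sh, tp3, e, PiLp.inner_apply, RCLike.inner_apply, Fintype.sum_prod_type,
      Fin.sum_univ_two, EuclideanSpace.single_apply] at h0 h1 h2 h3
    apply hne
    have hA : a 0 = 0 → a 1 = 0 → tp3 a b c = 0 := by
      intro u v
      have ha : a = 0 := by ext i; fin_cases i <;> simp [u, v]
      ext p; simp [tp3, ha]
    have hB : b 0 = 0 → b 1 = 0 → tp3 a b c = 0 := by
      intro u v
      have hb : b = 0 := by ext i; fin_cases i <;> simp [u, v]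
      ext p; simp [tp3, hb]
    have hC : c 0 = 0 → c 1 = 0 → tp3 a b c = 0 := by
      intro u v
      have hc : c = 0 := by ext i; fin_cases i <;> simp [u, v]
      ext p; simp [tp3, hc]
    have e0 : a 0 * b 1 * (c 0 - c 1) = 0 := by linear_combination h0
    have e1 : a 1 * (b 0 - b 1) * c 0 = 0 := by linear_combination h1
    have e2 : a 0 - a 1 = 0 ∨ b 0 = 0 ∨ c 1 = 0 := by
      have : (a 0 - a 1) * b 0 * c 1 = 0 := by linear_combination h2
      rcases mul_eq_zero.mp this with h | h
      · rcases mul_eq_zero.mp h with h | h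
        · exact Or.inl h
        · exact Or.inr (Or.inl h)
      · exact Or.inr (Or.inr h)
    have e0' : a 0 = 0 ∨ b 1 = 0 ∨ c 0 - c 1 = 0 := by
      rcases mul_eq_zero.mp e0 with h | h
      · rcases mul_eq_zero.mp h with h | h
        · exact Or.inl h
        · exact Or.inr (Or.inl h)
      · exact Or.inr (Or.inr h)
    have e1' : a 1 = 0 ∨ b 0 - b 1 = 0 ∨ c 0 = 0 := by
      rcases mul_eq_zero.mp e1 with h | h
      · rcases mul_eq_zero.mp h with h | h
        · exact Or.inl h
        · exact Or.inr (Or.inl h)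
      · exact Or.inr (Or.inr h)
    have e3 : (a 0 + a 1) * (b 0 + b 1) * (c 0 + c 1) = 0 := by linear_combination h3
    rcases mul_eq_zero.mp e3 with h | hc
    · rcases mul_eq_zero.mp h with ha | hb
      · -- a 0 + a 1 = 0
        by_cases hz : a 1 = 0
        · exact hA (by linear_combination ha - hz) hz
        have hd : a 0 - a 1 ≠ 0 := fun h => hz (by linear_combination (ha - h) / 2)
        have ha0 : a 0 ≠ 0 := fun h => hz (by linear_combination ha - h)
        rcases e2 with h | hb0 | hc1
        · exact absurd h hd
        · -- b 0 = 0
          by_cases hb1 : b 1 = 0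
          · exact hB hb0 hb1
          have hc0 : c 0 = 0 := by
            rcases e1' with h | h | h
            · exact absurd h hz
            · exact absurd (by linear_combination hb0 - h : b 1 = 0) hb1
            · exact h
          have hc1 : c 1 = 0 := by
            rcases e0' with h | h | h
            · exact absurd h ha0
            · exact absurd h hb1
            · linear_combination hc0 - h
          exact hC hc0 hc1
        · -- c 1 = 0
          rcases e0' with h | hb1 | h
          · exact absurd h ha0
          · rcases e1' with h | h | hc0
            · exact absurd h hz
            · exact hB (by linear_combination h + hb1) hb1
            · exact hC hc0 hc1
          · exact hC (by linear_combination h + hc1) hc1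
      · -- b 0 + b 1 = 0
        by_cases hz : b 0 = 0
        · exact hB hz (by linear_combination hb - hz)
        have hd : b 0 - b 1 ≠ 0 := fun h => hz (by linear_combination (hb + h) / 2)
        have hb1 : b 1 ≠ 0 := fun h => hz (by linear_combination hb - h)
        rcases e1' with ha1 | h | hc0
        · -- a 1 = 0
          rcases e2 with h | h | hc1
          · exact hA (by linear_combination h + ha1) ha1
          · exact absurd h hz
          · -- c 1 = 0
            rcases e0' with h | h | h
            · exact hA h ha1
            · exact absurd h hb1
            · exact hC (by linear_combination h + hc1) hc1
        · exact absurd h hd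
        · -- c 0 = 0
          rcases e0' with ha0 | h | h
          · -- a 0 = 0
            rcases e2 with h | h | hc1
            · exact hA ha0 (by linear_combination ha0 - h)
            · exact absurd h hz
            · exact hC hc0 hc1
          · exact absurd h hb1
          · exact hC hc0 (by linear_combination hc0 - h)
    · -- c 0 + c 1 = 0
      by_cases hz : c 0 = 0
      · exact hC hz (by linear_combination hc - hz)
      have hd : c 0 - c 1 ≠ 0 := fun h => hz (by linear_combination (hc + h) / 2)
      have hc1 : c 1 ≠ 0 := fun h => hz (by linear_combination hc - h)
      rcases e0' with ha0 | hb1 | h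
      · -- a 0 = 0
        rcases e2 with h | hb0 | h
        · exact hA ha0 (by linear_combination ha0 - h)
        · -- b 0 = 0
          rcases e1' with h | h | h
          · exact hA ha0 h
          · exact hB hb0 (by linear_combination hb0 - h)
          · exact absurd h hz
        · exact absurd h hc1
      · -- b 1 = 0
        rcases e1' with ha1 | h | h
        · -- a 1 = 0
          rcases e2 with h | hb0 | h
          · exact hA (by linear_combination h + ha1) ha1
          · exact hB hb0 hb1
          · exact absurd h hc1
        · exact hB (by linear_combination h + hb1) hb1
        · exact absurd h hz
      · exact absurd h hd
end
end
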